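/- Let X be a well-filtered T0 space, {K_i}_{i∈I} a filtered family of nonempty compact saturated sets with ⋂_i K_i = ↑C for an antichain C, and a ∈ C. If the filtered family {↑(↓a ∩ K_i)}_{i∈I} has intersection ↑Ĉ for an antichain Ĉ, then a ∈ Ĉ and Ĉ = {a}. -/

import Mathlib

open Set

/-- The specialization order of the paper: `x ≤ y` iff `x ∈ cl {y}`. -/
def specLE {X : Type*} [TopologicalSpace X] (x y : X) : Prop := x ∈ closure ({y} : Set X)

/-- Upward closure `↑A` w.r.t. the specialization order. -/
def upSet {X : Type*} [TopologicalSpace X] (A : Set X) : Set X := {y | ∃ x ∈ A, specLE x y}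

/-- Downward closure `↓A` w.r.t. the specialization order. -/
def downSet {X : Type*} [TopologicalSpace X] (A : Set X) : Set X := {y | ∃ x ∈ A, specLE y x}

/-- The saturation of a set: the intersection of all open sets containing it. -/
def sat {X : Type*} [TopologicalSpace X] (A : Set X) : Set X := ⋂₀ {U | IsOpen U ∧ A ⊆ U}

/-- A `T0` space is well-filtered if for every filtered family `𝓕` of compact saturated
sets and every open `U` with `⋂₀ 𝓕 ⊆ U`, some member of `𝓕` is contained in `U`. -/
def WellFilteredSpace (X : Type*) [TopologicalSpace X] : Prop :=
  ∀ 𝓕 : Set (Set X), 𝓕.Nonempty →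
    (∀ K ∈ 𝓕, IsCompact K ∧ sat K = K) →
    (∀ K₁ ∈ 𝓕, ∀ K₂ ∈ 𝓕, ∃ K₃ ∈ 𝓕, K₃ ⊆ K₁ ∩ K₂) →
    ∀ U : Set X, IsOpen U → ⋂₀ 𝓕 ⊆ U → ∃ K ∈ 𝓕, K ⊆ U

/-!
In Mathlib's terms `↑A` and the saturation of `A` are both `nhdsKer A`, `↓a` is `closure {a}`,
and `x ≤ y` is `y ⤳ x`. Since `a ∈ ↑(↓a ∩ K i)` for all `i`, some `c ∈ Ĉ` lies below `a`; as
`c ∈ ⋂ K i = ↑C` and `a` is minimal in `C`, `c = a`. If `b ≠ a` were another point of `Ĉ`, the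
closed set `↓a ∩ ↓b` would miss `↑Ĉ`, so by well-filteredness it misses some `↑(↓a ∩ K i)`;
yet that set contains `b` together with a point of `↓a ∩ K i` below `b`.
-/

open Topology

section SpecializationOrder

variable {X : Type*} [TopologicalSpace X]

lemma specLE_eq_flip_specializes : (specLE : X → X → Prop) = flip Specializes := by
  funext x y
  exact propext specializes_iff_mem_closure.symm

lemma upSet_eq_nhdsKer (A : Set X) : upSet A = nhdsKer A := by
  ext y
  simp only [upSet, specLE_eq_flip_specializes, flip, mem_ofPred_eq, mem_nhdsKer_iff_specializes]

lemma sat_eq_nhdsKer (A : Set X) : sat A = nhdsKer A := (nhdsKer_def A).symm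

lemma downSet_singleton (a : X) : downSet {a} = closure {a} := by
  ext y
  simp only [downSet, specLE, mem_singleton_iff, exists_eq_left, mem_ofPred_eq]

end SpecializationOrder

section Saturation

variable {X : Type*} [TopologicalSpace X]

lemma IsAntichain.mem_of_mem_nhdsKer [T0Space X] {C D : Set X} {a : X}
    (hC : IsAntichain (· ⤳ ·) C) (ha : a ∈ C) (hDC : nhdsKer D ⊆ nhdsKer C)
    (haD : a ∈ nhdsKer D) : a ∈ D := by
  obtain ⟨c, hcD, hac⟩ := mem_nhdsKer_iff_specializes.1 haD
  obtain ⟨c₀, hc₀C, hcc₀⟩ := mem_nhdsKer_iff_specializes.1 (hDC (subset_nhdsKer hcD))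
  obtain rfl : a = c₀ := hC.eq ha hc₀C (hac.trans hcc₀)
  rwa [(hac.antisymm hcc₀).eq]

lemma IsAntichain.disjoint_nhdsKer_closure_inter_closure {D : Set X} {a b : X}
    (hD : IsAntichain (· ⤳ ·) D) (ha : a ∈ D) (hb : b ∈ D) (hab : a ≠ b) :
    Disjoint (nhdsKer D) (closure {a} ∩ closure {b}) := by
  refine disjoint_left.2 fun y hy ⟨hya, hyb⟩ => hab ?_
  obtain ⟨d, hdD, hyd⟩ := mem_nhdsKer_iff_specializes.1 hy
  rw [hD.eq ha hdD ((specializes_iff_mem_closure.2 hya).trans hyd),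
    hD.eq hb hdD ((specializes_iff_mem_closure.2 hyb).trans hyd)]

lemma WellFilteredSpace.exists_subset_of_iInter_subset (hwf : WellFilteredSpace X)
    {ι : Type*} [Nonempty ι] {Q : ι → Set X} (hQc : ∀ i, IsCompact (Q i))
    (hQs : ∀ i, nhdsKer (Q i) = Q i) (hQ : Directed (· ⊇ ·) Q) {U : Set X} (hU : IsOpen U)
    (hQU : ⋂ i, Q i ⊆ U) : ∃ i, Q i ⊆ U := by
  obtain ⟨_, ⟨i, rfl⟩, hi⟩ := hwf (range Q) (range_nonempty Q)
    (forall_mem_range.2 fun i => ⟨hQc i, (sat_eq_nhdsKer _).trans (hQs i)⟩)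
    (forall_mem_range.2 fun i => forall_mem_range.2 fun j =>
      let ⟨k, hik, hjk⟩ := hQ i j; ⟨Q k, mem_range_self k, subset_inter hik hjk⟩)
    U hU (by rwa [sInter_range])
  exact ⟨i, hi⟩

end Saturation

section Localization

variable {X : Type*} [TopologicalSpace X] {ι : Type*} {K : ι → Set X} {a : X}

lemma mem_of_iInter_nhdsKer_closure_inter [T0Space X] (hKs : ∀ i, nhdsKer (K i) = K i)
    {C D : Set X} (hC : IsAntichain (· ⤳ ·) C) (hKC : ⋂ i, K i = nhdsKer C) (ha : a ∈ C)
    (hKD : ⋂ i, nhdsKer (closure {a} ∩ K i) = nhdsKer D) : a ∈ D := by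
  have haK : ∀ i, a ∈ K i := mem_iInter.1 (hKC ▸ subset_nhdsKer ha)
  refine hC.mem_of_mem_nhdsKer ha ?_ ?_
  · rw [← hKD, ← hKC]
    exact iInter_mono fun i => (nhdsKer_mono inter_subset_right).trans (hKs i).le
  · rw [← hKD]
    exact mem_iInter.2 fun i => subset_nhdsKer ⟨subset_closure rfl, haK i⟩

lemma eq_singleton_of_iInter_nhdsKer_closure_inter (hwf : WellFilteredSpace X) [Nonempty ι]
    (hKc : ∀ i, IsCompact (K i)) (hK : Directed (· ⊇ ·) K) {D : Set X}
    (hD : IsAntichain (· ⤳ ·) D) (ha : a ∈ D)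
    (hKD : ⋂ i, nhdsKer (closure {a} ∩ K i) = nhdsKer D) : D = {a} := by
  refine eq_singleton_iff_unique_mem.2 ⟨ha, fun b hb => by_contra fun hba => ?_⟩
  set Q : ι → Set X := fun i => nhdsKer (closure {a} ∩ K i)
  have hQ : Directed (· ⊇ ·) Q :=
    Directed.mono_comp (· ⊇ ·) (g := fun S => nhdsKer (closure {a} ∩ S))
      (fun _ _ h => nhdsKer_mono (inter_subset_inter_right _ h)) hK
  obtain ⟨i, hi⟩ := hwf.exists_subset_of_iInter_subset
    (fun i => ((hKc i).inter_left isClosed_closure).nhdsKer) (fun i => nhdsKer_nhdsKer _) hQ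
    (isClosed_closure.inter isClosed_closure).isOpen_compl
    (hKD ▸ (hD.disjoint_nhdsKer_closure_inter_closure ha hb (Ne.symm hba)).subset_compl_right)
  have hbQ : b ∈ Q i := mem_iInter.1 (hKD ▸ subset_nhdsKer hb) i
  obtain ⟨x, hx, hbx⟩ := mem_nhdsKer_iff_specializes.1 hbQ
  exact hi (subset_nhdsKer hx) ⟨hx.1, specializes_iff_mem_closure.1 hbx⟩

end Localization

theorem stmt18_general {X : Type*} [TopologicalSpace X] [T0Space X]
    (hwf : WellFilteredSpace X) {ι : Type*} [Nonempty ι] (K : ι → Set X)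
    (hc : ∀ i, IsCompact (K i)) (hs : ∀ i, sat (K i) = K i)
    (hfil : ∀ i j : ι, ∃ k : ι, K k ⊆ K i ∩ K j)
    (C : Set X) (hCanti : IsAntichain specLE C) (hC : ⋂ i, K i = upSet C)
    (a : X) (ha : a ∈ C)
    (Chat : Set X) (hChatAnti : IsAntichain specLE Chat)
    (hChat : ⋂ i, upSet (downSet {a} ∩ K i) = upSet Chat) :
    a ∈ Chat ∧ Chat = {a} := by
  rw [specLE_eq_flip_specializes] at hCanti hChatAnti
  simp only [upSet_eq_nhdsKer, downSet_singleton] at hC hChat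
  have hKs : ∀ i, nhdsKer (K i) = K i := fun i => (sat_eq_nhdsKer _).symm.trans (hs i)
  have hK : Directed (· ⊇ ·) K := fun i j => (hfil i j).imp fun _ hk => subset_inter_iff.1 hk
  have haChat := mem_of_iInter_nhdsKer_closure_inter hKs hCanti.flip hC ha hChat
  exact ⟨haChat,
    eq_singleton_of_iInter_nhdsKer_closure_inter hwf hc hK hChatAnti.flip haChat hChat⟩

theorem stmt18 {X : Type*} [TopologicalSpace X] [T0Space X]
    (hwf : WellFilteredSpace X) {ι : Type*} [Nonempty ι] (K : ι → Set X)
    (hne : ∀ i, (K i).Nonempty) (hc : ∀ i, IsCompact (K i)) (hs : ∀ i, sat (K i) = K i)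
    (hfil : ∀ i j : ι, ∃ k : ι, K k ⊆ K i ∩ K j)
    (C : Set X) (hCanti : IsAntichain specLE C) (hC : ⋂ i, K i = upSet C)
    (a : X) (ha : a ∈ C)
    (Chat : Set X) (hChatAnti : IsAntichain specLE Chat)
    (hChat : ⋂ i, upSet (downSet {a} ∩ K i) = upSet Chat) :
    a ∈ Chat ∧ Chat = {a} :=
  stmt18_general hwf K hc hs hfil C hCanti hC a ha Chat hChatAnti hChat
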